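/- arXiv:2305.05894 — 4 statements merged into one kernel-verified Lean document; each statement's English description precedes it below -/
import Mathlib

section
/- Fix integers n ≥ 1, m ≥ 2, let A ∈ ℝ^{n×n} and C = (1,0,…,0) ∈ ℝ^{1×n}, and set F = A⊗I_m, H = C⊗V̄, D = (1/m)·C(I_n⊗1_mᵀ), F_oo = A⊗I_{m-1}, H_o = C⊗I_{m-1}. Then for every Γ ∈ ℝ^{n×n(m-1)}, with T(Γ) = [(I_n⊗V̄†) + (I_n⊗1_m)Γ , I_n⊗1_m], the following observable Kalman canonical decomposition identities hold: T(Γ)⁻¹·F·T(Γ) equals the block lower-triangular matrix [[F_oo, 0],[−ΓF_oo + AΓ, A]]; H·T(Γ) = [H_o, 0]; and D·T(Γ) = [CΓ, C]. -/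
open Matrix
open scoped Kronecker Matrix

noncomputable section

/-- `V̄ = [I_{m-1}  -1_{m-1}] ∈ ℝ^{(m-1)×m}`. -/
def Vbar (m : ℕ) : Matrix (Fin (m-1)) (Fin m) ℝ :=
  Matrix.of fun i j => if (j : ℕ) = m - 1 then -1 else if (j : ℕ) = (i : ℕ) then 1 else 0

/-- The Moore–Penrose inverse `V̄† = V̄ᵀ(V̄V̄ᵀ)⁻¹`. -/
def Vdag (m : ℕ) : Matrix (Fin m) (Fin (m-1)) ℝ :=
  (Vbar m)ᵀ * (Vbar m * (Vbar m)ᵀ)⁻¹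

/-- The all-ones column vector `1_k`, as a `k × 1` matrix. -/
def onesCol (k : ℕ) : Matrix (Fin k) (Fin 1) ℝ := Matrix.of fun _ _ => 1

/-- `I_n ⊗ 1_m`, as an `(nm) × n` matrix. -/
def onesK (n m : ℕ) : Matrix (Fin n × Fin m) (Fin n) ℝ :=
  Matrix.of fun p j => if p.1 = j then 1 else 0

/-- `C = (1,0,…,0) ∈ ℝ^{1×n}`. -/
def Cmat (n : ℕ) : Matrix (Fin 1) (Fin n) ℝ :=
  Matrix.of fun _ j => if (j : ℕ) = 0 then 1 else 0

/-- `F = A ⊗ I_m`. -/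
def Fmat (n m : ℕ) (A : Matrix (Fin n) (Fin n) ℝ) :
    Matrix (Fin n × Fin m) (Fin n × Fin m) ℝ :=
  A ⊗ₖ (1 : Matrix (Fin m) (Fin m) ℝ)

/-- `H = C ⊗ V̄`. -/
def Hmat (n m : ℕ) : Matrix (Fin 1 × Fin (m-1)) (Fin n × Fin m) ℝ :=
  Cmat n ⊗ₖ Vbar m

/-- `F_oo = A ⊗ I_{m-1}`. -/
def Foo (n m : ℕ) (A : Matrix (Fin n) (Fin n) ℝ) :
    Matrix (Fin n × Fin (m-1)) (Fin n × Fin (m-1)) ℝ :=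
  A ⊗ₖ (1 : Matrix (Fin (m-1)) (Fin (m-1)) ℝ)

/-- `H_o = C ⊗ I_{m-1}`. -/
def Ho (n m : ℕ) : Matrix (Fin 1 × Fin (m-1)) (Fin n × Fin (m-1)) ℝ :=
  Cmat n ⊗ₖ (1 : Matrix (Fin (m-1)) (Fin (m-1)) ℝ)

/-- `D = (1/m)·C(I_n ⊗ 1_mᵀ)`. -/
def Dmat (n m : ℕ) : Matrix (Fin 1) (Fin n × Fin m) ℝ :=
  (m : ℝ)⁻¹ • (Cmat n * (onesK n m)ᵀ)

/-- `I_n ⊗ V̄†`. -/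
def VdagK (n m : ℕ) : Matrix (Fin n × Fin m) (Fin n × Fin (m-1)) ℝ :=
  (1 : Matrix (Fin n) (Fin n) ℝ) ⊗ₖ Vdag m

/-- `I_n ⊗ V̄`. -/
def VbarK (n m : ℕ) : Matrix (Fin n × Fin (m-1)) (Fin n × Fin m) ℝ :=
  (1 : Matrix (Fin n) (Fin n) ℝ) ⊗ₖ Vbar m

/-- `T(Γ) = [(I_n⊗V̄†) + (I_n⊗1_m)Γ , I_n⊗1_m]`. -/
def Tmat (n m : ℕ) (Γ : Matrix (Fin n) (Fin n × Fin (m-1)) ℝ) :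
    Matrix (Fin n × Fin m) ((Fin n × Fin (m-1)) ⊕ Fin n) ℝ :=
  Matrix.fromCols (VdagK n m + onesK n m * Γ) (onesK n m)

/-- The claimed inverse of `T(Γ)`: top block-row `I_n⊗V̄`,
bottom block-row `-Γ(I_n⊗V̄) + (1/m)(I_n⊗1_mᵀ)`. -/
def Tinv (n m : ℕ) (Γ : Matrix (Fin n) (Fin n × Fin (m-1)) ℝ) :
    Matrix ((Fin n × Fin (m-1)) ⊕ Fin n) (Fin n × Fin m) ℝ :=
  Matrix.fromRows (VbarK n m) (-(Γ * VbarK n m) + (m : ℝ)⁻¹ • (onesK n m)ᵀ)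

lemma sum_delta (m a : ℕ) (f : Fin m → ℝ) :
    ∑ l : Fin m, (if (l:ℕ) = a then f l else 0) = if h : a < m then f ⟨a,h⟩ else 0 := by
  split_ifs with h
  · rw [Finset.sum_eq_single (⟨a,h⟩ : Fin m)]
    · simp
    · intro b _ hb
      rw [if_neg]; intro hc; exact hb (Fin.ext hc)
    · simp
  · apply Finset.sum_eq_zero; intro l _
    have : (l:ℕ) ≠ a := by have := l.isLt; omega
    simp [this]

lemma sum_delta' (m a : ℕ) (f : Fin m → ℝ) :
    ∑ l : Fin m, (if a = (l:ℕ) then f l else 0) = if h : a < m then f ⟨a,h⟩ else 0 := by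
  rw [← sum_delta m a f]; congr 1; ext l; congr 1; simp [eq_comm]

lemma vbar_apply {m : ℕ} (i : Fin (m-1)) (j : Fin m) :
    Vbar m i j = (if (j:ℕ) = (i:ℕ) then 1 else 0) - (if (j:ℕ) = m-1 then 1 else 0) := by
  have hi : (i:ℕ) < m - 1 := i.isLt
  unfold Vbar
  by_cases h1 : (j:ℕ) = m-1
  · have h2 : (j:ℕ) ≠ (i:ℕ) := by omega
    have h3 : m - 1 ≠ (i:ℕ) := by omega
    simp [h1, h2, h3]
  · simp [h1]

lemma sum_vbar_row {m : ℕ} (hm : 2 ≤ m) (i : Fin (m-1)) :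
    ∑ j : Fin m, Vbar m i j = 0 := by
  have h1 : (i:ℕ) < m := by have := i.isLt; omega
  have h2 : m - 1 < m := by omega
  simp only [vbar_apply, Finset.sum_sub_distrib, sum_delta, h1, h2, dif_pos]
  ring

lemma vvt {m : ℕ} (hm : 2 ≤ m) :
    Vbar m * (Vbar m)ᵀ = 1 + Matrix.of (fun _ _ => (1:ℝ)) := by
  ext i j
  have h1 : (i:ℕ) < m := by have := i.isLt; omega
  have h2 : m - 1 < m := by omega
  have h3 : (i:ℕ) ≠ m - 1 := by have := i.isLt; omega
  have h4 : m - 1 ≠ (j:ℕ) := by have := j.isLt; omega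
  have h5 : ((i:ℕ) = (j:ℕ)) = (i = j) := by simp [Fin.ext_iff]
  simp only [mul_apply, transpose_apply, vbar_apply, sub_mul, ite_mul, one_mul, zero_mul,
    Finset.sum_sub_distrib, sum_delta, h1, h2, dif_pos, Matrix.add_apply, one_apply, of_apply,
    h3, h4, h5, if_false, if_true]
  ring

lemma vvt_inv {m : ℕ} (hm : 2 ≤ m) :
    (Vbar m * (Vbar m)ᵀ)⁻¹ = 1 - (m:ℝ)⁻¹ • Matrix.of (fun _ _ => (1:ℝ)) := by
  apply Matrix.inv_eq_right_inv
  rw [vvt hm]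
  ext i j
  have hm0 : (m:ℝ) ≠ 0 := by positivity
  have hcard : ((Finset.univ : Finset (Fin (m-1))).card : ℝ) = (m:ℝ) - 1 := by
    simp [Finset.card_univ]
    push_cast [Nat.cast_sub (by omega : 1 ≤ m)]
    ring
  simp only [mul_apply, Matrix.add_apply, Matrix.sub_apply, Matrix.smul_apply, one_apply, of_apply, smul_eq_mul,
    mul_one, add_mul, mul_sub, ite_mul, one_mul, zero_mul, Finset.sum_add_distrib,
    Finset.sum_sub_distrib, Finset.sum_ite_eq, Finset.mem_univ, if_true, Finset.sum_const,
    nsmul_eq_mul]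
  rw [hcard]
  by_cases h : i = j <;> simp [h] <;> field_simp <;> ring

lemma vdag_apply {m : ℕ} (hm : 2 ≤ m) (k : Fin m) (j : Fin (m-1)) :
    Vdag m k j = (if (k:ℕ) = (j:ℕ) then 1 else 0) - (m:ℝ)⁻¹ := by
  have hm0 : (m:ℝ) ≠ 0 := by positivity
  unfold Vdag
  rw [vvt_inv hm]
  have hj : (j:ℕ) < m - 1 := j.isLt
  have hcard : ((Finset.univ : Finset (Fin (m-1))).card : ℝ) = (m:ℝ) - 1 := by
    simp [Finset.card_univ]
    push_cast [Nat.cast_sub (by omega : 1 ≤ m)]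
    ring
  simp only [mul_apply, transpose_apply, vbar_apply, Matrix.sub_apply, Matrix.smul_apply, one_apply,
    of_apply, smul_eq_mul, mul_one, sub_mul, ite_mul, one_mul, zero_mul, mul_sub,
    Finset.sum_sub_distrib, sum_delta', Finset.sum_ite_eq', Finset.mem_univ, if_true,
    Finset.sum_const, nsmul_eq_mul]
  rw [hcard]
  by_cases hk : (k:ℕ) < m - 1
  · have hk2 : ¬ ((k:ℕ) = m - 1) := by omega
    simp only [hk, dif_pos, hk2, if_false]
    simp [Fin.ext_iff]
  · have hk2 : (k:ℕ) = m - 1 := by have := k.isLt; omega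
    have hk3 : ¬ ((k:ℕ) = (j:ℕ)) := by omega
    have hk4 : ¬ (m - 1 = (j:ℕ)) := by omega
    simp only [hk, dif_neg, not_false_iff, hk2, if_true, hk3, hk4, if_false, lt_irrefl,
      Finset.sum_ite_eq', Finset.mem_univ]
    simp only [sub_zero, zero_sub, Finset.sum_const_zero]
    field_simp
    ring

lemma sum_vdag_col {m : ℕ} (hm : 2 ≤ m) (j : Fin (m-1)) :
    ∑ k : Fin m, Vdag m k j = 0 := by
  have hm0 : (m:ℝ) ≠ 0 := by positivity
  have hj : (j:ℕ) < m := by have := j.isLt; omega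
  simp only [vdag_apply hm, Finset.sum_sub_distrib, sum_delta, hj, dif_pos,
    Finset.sum_const, Finset.card_univ, Fintype.card_fin, nsmul_eq_mul]
  field_simp
  norm_num

lemma vbar_mul_vdag {m : ℕ} (hm : 2 ≤ m) : Vbar m * Vdag m = 1 := by
  ext i j
  have h1 : (i:ℕ) < m := by have := i.isLt; omega
  have h2 : m - 1 < m := by omega
  have h4 : ¬ (m - 1 = (j:ℕ)) := by have := j.isLt; omega
  have h5 : ((i:ℕ) = (j:ℕ)) = (i = j) := by simp [Fin.ext_iff]
  simp only [mul_apply, vbar_apply, vdag_apply hm, sub_mul, ite_mul, one_mul, zero_mul,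
    Finset.sum_sub_distrib, sum_delta, h1, h2, dif_pos, one_apply, h4, if_false, h5]
  ring

lemma vdag_mul_vbar {m : ℕ} (hm : 2 ≤ m) :
    Vdag m * Vbar m = 1 - (m:ℝ)⁻¹ • Matrix.of (fun _ _ => (1:ℝ)) := by
  ext k l
  have hm0 : (m:ℝ) ≠ 0 := by positivity
  have hcard : ((Finset.univ : Finset (Fin (m-1))).card : ℝ) = (m:ℝ) - 1 := by
    simp [Finset.card_univ]
    push_cast [Nat.cast_sub (by omega : 1 ≤ m)]
    ring
  have h5 : ((k:ℕ) = (l:ℕ)) = (k = l) := by simp [Fin.ext_iff]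
  simp only [mul_apply, vbar_apply, vdag_apply hm, sub_mul, mul_sub, ite_mul, mul_ite,
    one_mul, mul_one, zero_mul, mul_zero, Finset.sum_sub_distrib, sum_delta, sum_delta',
    Finset.sum_const, nsmul_eq_mul, Matrix.sub_apply, one_apply, Matrix.smul_apply, of_apply, smul_eq_mul,
    mul_one]
  by_cases hl : (l:ℕ) < m - 1
  · have hl2 : ¬ ((l:ℕ) = m - 1) := by omega
    simp only [hl, dif_pos, hl2, if_false, Finset.sum_const_zero, sub_zero, h5]
  · have hl2 : (l:ℕ) = m - 1 := by have := l.isLt; omega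
    simp only [hl, dif_neg, not_false_iff, hl2, if_true, zero_sub, Finset.sum_sub_distrib,
      sum_delta', Finset.sum_const, nsmul_eq_mul, mul_one, hcard]
    by_cases hk : (k:ℕ) < m - 1
    · have hne : ¬ (k = l) := by rw [← h5]; omega
      simp only [hk, dif_pos, hne, if_false, lt_irrefl, dif_neg, not_false_iff]
      field_simp
      ring
    · have heq : k = l := by rw [← h5]; have := k.isLt; omega
      simp only [heq, hk, hl, dif_neg, not_false_iff, if_pos, lt_irrefl]
      field_simp
      ring

section KLevel
variable (n m : ℕ)

lemma VbarK_mul_VdagK (hm : 2 ≤ m) : VbarK n m * VdagK n m = 1 := by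
  unfold VbarK VdagK
  rw [← Matrix.mul_kronecker_mul, vbar_mul_vdag hm, Matrix.one_mul, Matrix.one_kronecker_one]

lemma VbarK_mul_onesK (hm : 2 ≤ m) : VbarK n m * onesK n m = 0 := by
  ext ⟨i,r⟩ j
  simp only [mul_apply, VbarK, onesK, Matrix.kroneckerMap_apply, Matrix.of_apply,
    Fintype.sum_prod_type, one_apply, ite_mul, mul_ite, one_mul, zero_mul, mul_one, mul_zero,
    Matrix.zero_apply]
  rw [Finset.sum_eq_single i] <;> simp [sum_vbar_row hm]

lemma onesKT_mul_VdagK (hm : 2 ≤ m) : (onesK n m)ᵀ * VdagK n m = 0 := by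
  ext i ⟨j,r⟩
  simp only [mul_apply, VdagK, onesK, transpose_apply, Matrix.kroneckerMap_apply,
    Matrix.of_apply, Fintype.sum_prod_type, one_apply, ite_mul, mul_ite, one_mul, zero_mul,
    mul_one, mul_zero, Matrix.zero_apply]
  rw [Finset.sum_eq_single j]
  · simp [sum_vdag_col hm]
  · intro b _ hb
    simp [hb]
  · simp

lemma onesKT_mul_onesK : (onesK n m)ᵀ * onesK n m = (m:ℝ) • 1 := by
  ext i j
  simp only [mul_apply, onesK, transpose_apply, Matrix.of_apply, Fintype.sum_prod_type,
    ite_mul, one_mul, zero_mul, mul_ite, mul_one, mul_zero, Matrix.smul_apply, one_apply,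
    smul_eq_mul, Finset.sum_const, Finset.card_univ, Fintype.card_fin, nsmul_eq_mul,
    Finset.sum_ite_eq', Finset.mem_univ, if_true]
  by_cases h : i = j <;> simp [h]
  intro h2
  exact absurd h2.symm h

lemma onesK_mul_onesKT : onesK n m * (onesK n m)ᵀ =
    (1 : Matrix (Fin n) (Fin n) ℝ) ⊗ₖ (Matrix.of (fun _ _ => (1:ℝ)) : Matrix (Fin m) (Fin m) ℝ) := by
  ext ⟨i,r⟩ ⟨j,s⟩
  simp only [mul_apply, onesK, transpose_apply, Matrix.of_apply, Matrix.kroneckerMap_apply,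
    one_apply, mul_ite, ite_mul, one_mul, zero_mul, mul_one, mul_zero]
  by_cases h : i = j <;> simp [h, Finset.sum_ite_eq]

lemma VdagK_mul_VbarK (hm : 2 ≤ m) :
    VdagK n m * VbarK n m + (m:ℝ)⁻¹ • (onesK n m * (onesK n m)ᵀ) = 1 := by
  rw [onesK_mul_onesKT, VdagK, VbarK, ← Matrix.mul_kronecker_mul, Matrix.one_mul,
    vdag_mul_vbar hm, ← Matrix.kronecker_smul, ← Matrix.kronecker_add]
  simp [Matrix.one_kronecker_one]

variable (A : Matrix (Fin n) (Fin n) ℝ)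

lemma Fmat_mul_VdagK : Fmat n m A * VdagK n m = VdagK n m * Foo n m A := by
  unfold Fmat VdagK Foo
  rw [← Matrix.mul_kronecker_mul, ← Matrix.mul_kronecker_mul, Matrix.mul_one,
    Matrix.one_mul, Matrix.mul_one, Matrix.one_mul]

lemma VbarK_mul_Fmat : VbarK n m * Fmat n m A = Foo n m A * VbarK n m := by
  unfold Fmat VbarK Foo
  rw [← Matrix.mul_kronecker_mul, ← Matrix.mul_kronecker_mul, Matrix.mul_one,
    Matrix.one_mul, Matrix.mul_one, Matrix.one_mul]

lemma Fmat_mul_onesK : Fmat n m A * onesK n m = onesK n m * A := by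
  ext ⟨i,r⟩ j
  simp [Fmat, onesK, mul_apply, Fintype.sum_prod_type, one_apply, mul_ite, ite_mul,
    mul_one, mul_zero, one_mul, zero_mul, Finset.sum_ite_eq, Finset.sum_ite_eq']

lemma onesKT_mul_Fmat : (onesK n m)ᵀ * Fmat n m A = A * (onesK n m)ᵀ := by
  ext i ⟨j,r⟩
  simp [Fmat, onesK, mul_apply, Fintype.sum_prod_type, one_apply, mul_ite, ite_mul,
    mul_one, mul_zero, one_mul, zero_mul, Finset.sum_ite_eq, Finset.sum_ite_eq']

lemma Hmat_mul_VdagK (hm : 2 ≤ m) : Hmat n m * VdagK n m = Ho n m := by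
  unfold Hmat VdagK Ho
  rw [← Matrix.mul_kronecker_mul, Matrix.mul_one, vbar_mul_vdag hm]

lemma Hmat_mul_onesK (hm : 2 ≤ m) : Hmat n m * onesK n m = 0 := by
  ext ⟨i,r⟩ j
  simp only [mul_apply, Hmat, onesK, Matrix.kroneckerMap_apply, Matrix.of_apply,
    Fintype.sum_prod_type, mul_ite, ite_mul, mul_one, mul_zero, one_mul, zero_mul,
    Matrix.zero_apply, ← Finset.sum_mul, Finset.mul_sum]
  rw [Finset.sum_eq_single j]
  · simp [sum_vbar_row hm, Cmat]
  · intro b _ hb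
    simp [hb]
  · simp
end KLevel

section Assemble
variable {n m : ℕ}

lemma key_top (hm : 2 ≤ m) (Δ : Matrix (Fin n) (Fin n × Fin (m-1)) ℝ) :
    VbarK n m * (VdagK n m + onesK n m * Δ) = 1 := by
  rw [Matrix.mul_add, VbarK_mul_VdagK n m hm, ← Matrix.mul_assoc, VbarK_mul_onesK n m hm,
    Matrix.zero_mul, add_zero]

lemma key_row {α : Type*} (hm : 2 ≤ m) (P : Matrix α (Fin n × Fin (m-1)) ℝ)
    (Q : Matrix α (Fin n) ℝ) (Δ : Matrix (Fin n) (Fin n × Fin (m-1)) ℝ) :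
    (-(P * VbarK n m) + (m:ℝ)⁻¹ • (Q * (onesK n m)ᵀ)) * (VdagK n m + onesK n m * Δ) =
      -P + Q * Δ := by
  have hm0 : (m:ℝ) ≠ 0 := by positivity
  rw [Matrix.add_mul, Matrix.neg_mul, Matrix.mul_add, Matrix.mul_add, Matrix.mul_assoc P, VbarK_mul_VdagK n m hm,
    Matrix.mul_one, Matrix.mul_assoc P, ← Matrix.mul_assoc (VbarK n m),
    VbarK_mul_onesK n m hm, Matrix.zero_mul, Matrix.mul_zero, add_zero,
    Matrix.smul_mul, Matrix.smul_mul, Matrix.mul_assoc Q, onesKT_mul_VdagK n m hm,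
    Matrix.mul_zero, smul_zero, Matrix.mul_assoc Q, ← Matrix.mul_assoc ((onesK n m)ᵀ),
    onesKT_mul_onesK, Matrix.smul_mul, Matrix.one_mul, Matrix.mul_smul, smul_smul,
    inv_mul_cancel₀ hm0, one_smul, zero_add]

lemma key_col {α : Type*} (hm : 2 ≤ m) (P : Matrix α (Fin n × Fin (m-1)) ℝ)
    (Q : Matrix α (Fin n) ℝ) :
    (-(P * VbarK n m) + (m:ℝ)⁻¹ • (Q * (onesK n m)ᵀ)) * onesK n m = Q := by
  have hm0 : (m:ℝ) ≠ 0 := by positivity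
  rw [Matrix.add_mul, Matrix.neg_mul, Matrix.mul_assoc P, VbarK_mul_onesK n m hm, Matrix.mul_zero,
    neg_zero, Matrix.smul_mul, Matrix.mul_assoc Q, onesKT_mul_onesK, Matrix.mul_smul,
    smul_smul, inv_mul_cancel₀ hm0, one_smul, Matrix.mul_one, zero_add]

end Assemble

/-- Observable Kalman canonical decomposition identities:
`T(Γ)⁻¹·F·T(Γ) = [[F_oo, 0],[−ΓF_oo + AΓ, A]]`, `H·T(Γ) = [H_o, 0]`,
and `D·T(Γ) = [CΓ, C]`, where `T(Γ)⁻¹` is the explicit inverse of `T(Γ)`. -/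
theorem stmt_2 (n m : ℕ) (hn : 1 ≤ n) (hm : 2 ≤ m)
    (A : Matrix (Fin n) (Fin n) ℝ)
    (Γ : Matrix (Fin n) (Fin n × Fin (m-1)) ℝ) :
    Tinv n m Γ * Tmat n m Γ = 1 ∧
    Tmat n m Γ * Tinv n m Γ = 1 ∧
    Tinv n m Γ * Fmat n m A * Tmat n m Γ =
      Matrix.fromBlocks (Foo n m A) 0 (-(Γ * Foo n m A) + A * Γ) A ∧
    Hmat n m * Tmat n m Γ = Matrix.fromCols (Ho n m) 0 ∧
    Dmat n m * Tmat n m Γ = Matrix.fromCols (Cmat n * Γ) (Cmat n) := by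
  have hm0 : (m:ℝ) ≠ 0 := by positivity
  have hone : (m:ℝ)⁻¹ • ((1 : Matrix (Fin n) (Fin n) ℝ) * (onesK n m)ᵀ) =
      (m:ℝ)⁻¹ • (onesK n m)ᵀ := by rw [Matrix.one_mul]
  refine ⟨?_, ?_, ?_, ?_, ?_⟩
  · rw [Tinv, Tmat, Matrix.fromRows_mul_fromCols]
    rw [key_top hm Γ, VbarK_mul_onesK n m hm, ← hone, key_row hm Γ 1 Γ, key_col hm Γ 1,
      Matrix.one_mul, neg_add_cancel, Matrix.fromBlocks_one]
  · rw [Tinv, Tmat, Matrix.fromCols_mul_fromRows, Matrix.add_mul, Matrix.mul_add,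
      Matrix.mul_neg, ← Matrix.mul_assoc (onesK n m) Γ (VbarK n m), Matrix.mul_smul,
      ← VdagK_mul_VbarK n m hm]
    abel
  · rw [Tinv, Tmat, Matrix.fromRows_mul, Matrix.fromRows_mul_fromCols]
    have e2 : (-(Γ * VbarK n m) + (m:ℝ)⁻¹ • (onesK n m)ᵀ) * Fmat n m A =
        -(Γ * Foo n m A * VbarK n m) + (m:ℝ)⁻¹ • (A * (onesK n m)ᵀ) := by
      rw [Matrix.add_mul, Matrix.neg_mul, Matrix.mul_assoc Γ, VbarK_mul_Fmat, ← Matrix.mul_assoc Γ,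
        Matrix.smul_mul, onesKT_mul_Fmat]
    rw [e2, VbarK_mul_Fmat]
    rw [Matrix.mul_assoc (Foo n m A), key_top hm Γ, Matrix.mul_one,
      Matrix.mul_assoc (Foo n m A), VbarK_mul_onesK n m hm, Matrix.mul_zero,
      key_row hm (Γ * Foo n m A) A Γ, key_col hm (Γ * Foo n m A) A]
  · rw [Tmat, Matrix.mul_fromCols, Matrix.mul_add, Hmat_mul_VdagK n m hm,
      ← Matrix.mul_assoc, Hmat_mul_onesK n m hm, Matrix.zero_mul, add_zero]
  · rw [Tmat, Matrix.mul_fromCols, Dmat, Matrix.smul_mul, Matrix.mul_add,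
      Matrix.mul_assoc, onesKT_mul_VdagK n m hm, Matrix.mul_zero, zero_add,
      Matrix.mul_assoc, ← Matrix.mul_assoc ((onesK n m)ᵀ), onesKT_mul_onesK,
      Matrix.smul_mul, Matrix.one_mul, Matrix.mul_smul, smul_smul, inv_mul_cancel₀ hm0,
      one_smul, Matrix.smul_mul, Matrix.mul_assoc, onesKT_mul_onesK, Matrix.mul_smul,
      Matrix.mul_one, smul_smul, inv_mul_cancel₀ hm0, one_smul]
end
end

section
/- Fix integers n ≥ 1, m ≥ 2, let A ∈ ℝ^{n×n}, C = (1,0,…,0) ∈ ℝ^{1×n}, H = C⊗V̄, H_o = C⊗I_{m-1}, and let r ∈ ℝ. Suppose P ∈ ℝ^{nm×nm} and P̌ ∈ ℝ^{n(m-1)×n(m-1)} satisfy the intertwining relation P(I_n⊗V̄†) = (I_n⊗V̄†)P̌. Then (I_n⊗V̄)P(I_n⊗V̄)ᵀ = P̌·(I_n⊗V̄V̄ᵀ), and H P Hᵀ + r²I_{m-1} = (H_o P̌ H_oᵀ + r²(V̄V̄ᵀ)⁻¹)·(V̄V̄ᵀ). -/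
open Matrix
open scoped Kronecker Matrix

noncomputable section

def Jm (k : ℕ) : Matrix (Fin k) (Fin k) ℝ := Matrix.of fun _ _ => 1

lemma VVt (m : ℕ) (hm : 2 ≤ m) : Vbar m * (Vbar m)ᵀ = 1 + Jm (m-1) := by
  have hlt : m - 1 < m := by omega
  ext i k
  have hi : (i:ℕ) < m := lt_trans i.isLt hlt
  have hi' : (i:ℕ) < m - 1 := i.isLt
  have hk' : (k:ℕ) < m - 1 := k.isLt
  simp only [Matrix.mul_apply, Vbar, Matrix.transpose_apply, Matrix.of_apply]
  have hsum : ∀ j : Fin m,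
      (if (j:ℕ) = m-1 then (-1:ℝ) else if (j:ℕ) = (i:ℕ) then 1 else 0) *
      (if (j:ℕ) = m-1 then (-1:ℝ) else if (j:ℕ) = (k:ℕ) then 1 else 0)
      = (if j = (⟨m-1, hlt⟩ : Fin m) then (1:ℝ) else 0)
        + (if j = (⟨(i:ℕ), hi⟩ : Fin m) ∧ i = k then (1:ℝ) else 0) := by
    intro j
    by_cases h1 : (j:ℕ) = m-1
    · have h2 : ¬ ((j:ℕ) = (i:ℕ)) := by omega
      have h4 : ¬ (m - 1 = (i:ℕ) ∧ (i:ℕ) = (k:ℕ)) := by omega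
      simp [Fin.ext_iff, h1, h2, h4]
    · by_cases h2 : (j:ℕ) = (i:ℕ)
      · have h3 : ¬ ((i:ℕ) = m-1) := by omega
        simp [Fin.ext_iff, h1, h2, h3]
      · simp [Fin.ext_iff, h1, h2]
  rw [Finset.sum_congr rfl fun j _ => hsum j, Finset.sum_add_distrib]
  by_cases hik : i = k
  · simp [hik, Matrix.one_apply, Matrix.add_apply, Jm, Finset.sum_ite_eq']
  · simp [hik, Matrix.one_apply, Matrix.add_apply, Jm, Finset.sum_ite_eq']

lemma JJ (k : ℕ) : Jm k * Jm k = ((k : ℕ) : ℝ) • Jm k := by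
  ext i j
  simp [Matrix.mul_apply, Jm, Finset.sum_const, Finset.card_univ]

lemma Wright (m : ℕ) (hm : 2 ≤ m) :
    (1 + Jm (m-1)) * (1 - (m:ℝ)⁻¹ • Jm (m-1)) = 1 := by
  have hm0 : (m:ℝ) ≠ 0 := by positivity
  have hc : ((m-1 : ℕ) : ℝ) = (m:ℝ) - 1 := by
    rw [Nat.cast_sub (by omega)]; norm_num
  rw [mul_sub, mul_one, Matrix.mul_smul, add_mul, one_mul, JJ, smul_add, hc, smul_smul,
    ← add_smul]
  have hs : (m:ℝ)⁻¹ + (m:ℝ)⁻¹ * ((m:ℝ) - 1) = 1 := by field_simp; ring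
  rw [hs, one_smul]
  abel

lemma Wdet (m : ℕ) (hm : 2 ≤ m) : IsUnit (Vbar m * (Vbar m)ᵀ).det := by
  rw [VVt m hm]
  have := invertibleOfRightInverse _ _ (Wright m hm)
  exact Matrix.isUnit_det_of_invertible _

lemma kronT {p q s t : Type*} [Fintype p] [Fintype q] [Fintype s] [Fintype t]
    (A : Matrix p q ℝ) (B : Matrix s t ℝ) : (A ⊗ₖ B)ᵀ = Aᵀ ⊗ₖ Bᵀ :=
  (Matrix.kroneckerMap_transpose _ _ _).symm

/-- If `P(I_n⊗V̄†) = (I_n⊗V̄†)P̌`, then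
`(I_n⊗V̄)P(I_n⊗V̄)ᵀ = P̌·(I_n⊗V̄V̄ᵀ)` and
`H P Hᵀ + r²I_{m-1} = (H_o P̌ H_oᵀ + r²(V̄V̄ᵀ)⁻¹)·(V̄V̄ᵀ)`
(the `(m-1)×(m-1)` matrices `V̄V̄ᵀ`, `(V̄V̄ᵀ)⁻¹` being embedded as `I_1 ⊗ ·`). -/
theorem stmt_4 (n m : ℕ) (hn : 1 ≤ n) (hm : 2 ≤ m)
    (A : Matrix (Fin n) (Fin n) ℝ) (r : ℝ)
    (P : Matrix (Fin n × Fin m) (Fin n × Fin m) ℝ)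
    (Pc : Matrix (Fin n × Fin (m-1)) (Fin n × Fin (m-1)) ℝ)
    (hPV : P * VdagK n m = VdagK n m * Pc) :
    VbarK n m * P * (VbarK n m)ᵀ =
      Pc * ((1 : Matrix (Fin n) (Fin n) ℝ) ⊗ₖ (Vbar m * (Vbar m)ᵀ)) ∧
    Hmat n m * P * (Hmat n m)ᵀ + r ^ 2 • 1 =
      (Ho n m * Pc * (Ho n m)ᵀ +
          r ^ 2 • ((1 : Matrix (Fin 1) (Fin 1) ℝ) ⊗ₖ (Vbar m * (Vbar m)ᵀ)⁻¹)) *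
        ((1 : Matrix (Fin 1) (Fin 1) ℝ) ⊗ₖ (Vbar m * (Vbar m)ᵀ)) := by
  
  have hdet := Wdet m hm
  have hVVd : Vbar m * Vdag m = 1 := by
    rw [Vdag, ← Matrix.mul_assoc, Matrix.mul_nonsing_inv _ hdet]
  have hVt : (Vbar m)ᵀ = Vdag m * (Vbar m * (Vbar m)ᵀ) := by
    rw [Vdag, Matrix.mul_assoc, Matrix.nonsing_inv_mul _ hdet, Matrix.mul_one]
  have hInvW : (Vbar m * (Vbar m)ᵀ)⁻¹ * (Vbar m * (Vbar m)ᵀ) = 1 :=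
    Matrix.nonsing_inv_mul _ hdet
  have hT : (VbarK n m)ᵀ
      = VdagK n m * ((1 : Matrix (Fin n) (Fin n) ℝ) ⊗ₖ (Vbar m * (Vbar m)ᵀ)) := by
    rw [VdagK, ← Matrix.mul_kronecker_mul, Matrix.one_mul, ← hVt, VbarK, kronT,
      Matrix.transpose_one]
  have hVbVd : VbarK n m * VdagK n m = 1 := by
    rw [VbarK, VdagK, ← Matrix.mul_kronecker_mul, Matrix.one_mul, hVVd,
      Matrix.one_kronecker_one]
  have first : VbarK n m * P * (VbarK n m)ᵀ
      = Pc * ((1 : Matrix (Fin n) (Fin n) ℝ) ⊗ₖ (Vbar m * (Vbar m)ᵀ)) := by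
    rw [hT, ← Matrix.mul_assoc, Matrix.mul_assoc (VbarK n m) P (VdagK n m), hPV,
      ← Matrix.mul_assoc, hVbVd, Matrix.one_mul]
  refine ⟨first, ?_⟩
  have hH : Hmat n m = Ho n m * VbarK n m := by
    rw [Hmat, Ho, VbarK, ← Matrix.mul_kronecker_mul, Matrix.mul_one, Matrix.one_mul]
  have hHoT : ((1 : Matrix (Fin n) (Fin n) ℝ) ⊗ₖ (Vbar m * (Vbar m)ᵀ)) * (Ho n m)ᵀ
      = (Ho n m)ᵀ * ((1 : Matrix (Fin 1) (Fin 1) ℝ) ⊗ₖ (Vbar m * (Vbar m)ᵀ)) := by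
    rw [Ho, kronT, Matrix.transpose_one,
      ← Matrix.mul_kronecker_mul, ← Matrix.mul_kronecker_mul,
      Matrix.one_mul, Matrix.mul_one, Matrix.mul_one, Matrix.one_mul]
  have hr : (1 : Matrix (Fin 1 × Fin (m-1)) (Fin 1 × Fin (m-1)) ℝ)
      = ((1 : Matrix (Fin 1) (Fin 1) ℝ) ⊗ₖ (Vbar m * (Vbar m)ᵀ)⁻¹) *
        ((1 : Matrix (Fin 1) (Fin 1) ℝ) ⊗ₖ (Vbar m * (Vbar m)ᵀ)) := by
    rw [← Matrix.mul_kronecker_mul, Matrix.one_mul, hInvW, Matrix.one_kronecker_one]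
  have hHPH : Hmat n m * P * (Hmat n m)ᵀ
      = Ho n m * Pc * (Ho n m)ᵀ * ((1 : Matrix (Fin 1) (Fin 1) ℝ) ⊗ₖ (Vbar m * (Vbar m)ᵀ)) := by
    rw [hH, Matrix.transpose_mul]
    calc Ho n m * VbarK n m * P * ((VbarK n m)ᵀ * (Ho n m)ᵀ)
        = Ho n m * (VbarK n m * P * (VbarK n m)ᵀ) * (Ho n m)ᵀ := by
          simp only [Matrix.mul_assoc]
      _ = Ho n m * (Pc * ((1 : Matrix (Fin n) (Fin n) ℝ) ⊗ₖ (Vbar m * (Vbar m)ᵀ))) *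
            (Ho n m)ᵀ := by rw [first]
      _ = Ho n m * Pc *
            (((1 : Matrix (Fin n) (Fin n) ℝ) ⊗ₖ (Vbar m * (Vbar m)ᵀ)) * (Ho n m)ᵀ) := by
          simp only [Matrix.mul_assoc]
      _ = Ho n m * Pc * (Ho n m)ᵀ *
            ((1 : Matrix (Fin 1) (Fin 1) ℝ) ⊗ₖ (Vbar m * (Vbar m)ᵀ)) := by
          rw [hHoT]; simp only [Matrix.mul_assoc]
  rw [Matrix.add_mul, smul_mul_assoc, ← hr, hHPH]
end
end

section
/- (Theorem 1, observable part.) Fix integers n ≥ 1, m ≥ 2, A ∈ ℝ^{n×n}, C = (1,0,…,0) ∈ ℝ^{1×n}, F = A⊗I_m, H = C⊗V̄, F_oo = A⊗I_{m-1}, H_o = C⊗I_{m-1}; let r ≠ 0, Q ∈ ℝ^{n×n} symmetric positive semidefinite, p ≥ 0. Let the CKF be: P_0 = p·I_{nm}, L_k = −F P_k Hᵀ(H P_k Hᵀ + r²I_{m-1})⁻¹, P_{k+1} = (F + L_k H)P_k Fᵀ + Q⊗I_m, x̂[k+1] = F x̂[k] − L_k(y[k] − H x̂[k]). Let the structured filter's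 observable part be: P̂_0 = (I_n⊗V̄)P_0(I_n⊗V̄)ᵀ, L̂_k = −F_oo P̂_k H_oᵀ(H_o P̂_k H_oᵀ + r²I_{m-1})⁻¹, P̂_{k+1} = (F_oo + L̂_k H_o)P̂_k F_ooᵀ + Q⊗(V̄V̄ᵀ), ξ̂_o[k+1] = F_oo ξ̂_o[k] − L̂_k(y[k] − H_o ξ̂_o[k]) with ξ̂_o[0] = (I_n⊗V̄)x̂[0] and the same measurements y[k]. Then for every k ≥ 0: P̂_k = (I_n⊗V̄)P_k(I_n⊗V̄)ᵀ, L̂_k = (I_n⊗V̄)L_k, and ξ̂_o[k] = (I_n⊗V̄)x̂[k]; i.e., the structured Kalman filter yields the same predicted observable state as the CKF. -/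
open Matrix
open scoped Kronecker Matrix

noncomputable section

section Aux
variable (n m : ℕ) (A Q : Matrix (Fin n) (Fin n) ℝ)

lemma VbarK_transpose : (VbarK n m)ᵀ = (1 : Matrix (Fin n) (Fin n) ℝ) ⊗ₖ (Vbar m)ᵀ := by
  rw [VbarK, ← Matrix.kroneckerMap_transpose, Matrix.transpose_one]

lemma Ho_mul_VbarK : Ho n m * VbarK n m = Hmat n m := by
  rw [Ho, VbarK, Hmat, ← Matrix.mul_kronecker_mul, Matrix.mul_one, Matrix.one_mul]

lemma Foo_mul_VbarK : Foo n m A * VbarK n m = VbarK n m * Fmat n m A := by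
  rw [Foo, VbarK, Fmat, ← Matrix.mul_kronecker_mul, ← Matrix.mul_kronecker_mul,
    Matrix.mul_one, Matrix.one_mul, Matrix.mul_one, Matrix.one_mul]

lemma VbarKT_mul_HoT : (VbarK n m)ᵀ * (Ho n m)ᵀ = (Hmat n m)ᵀ := by
  rw [← Matrix.transpose_mul, Ho_mul_VbarK]

lemma VbarKT_mul_FooT :
    (VbarK n m)ᵀ * (Foo n m A)ᵀ = (Fmat n m A)ᵀ * (VbarK n m)ᵀ := by
  rw [← Matrix.transpose_mul, Foo_mul_VbarK, Matrix.transpose_mul]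

lemma Foo_VbarK_assoc {o : Type*} [Fintype o] (X : Matrix (Fin n × Fin m) o ℝ) :
    Foo n m A * (VbarK n m * X) = VbarK n m * (Fmat n m A * X) := by
  rw [← Matrix.mul_assoc, Foo_mul_VbarK, Matrix.mul_assoc]

lemma Ho_VbarK_assoc {o : Type*} [Fintype o] (X : Matrix (Fin n × Fin m) o ℝ) :
    Ho n m * (VbarK n m * X) = Hmat n m * X := by
  rw [← Matrix.mul_assoc, Ho_mul_VbarK]

lemma VbarK_mul_QK : VbarK n m * (Q ⊗ₖ (1 : Matrix (Fin m) (Fin m) ℝ) * (VbarK n m)ᵀ) =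
    Q ⊗ₖ (Vbar m * (Vbar m)ᵀ) := by
  rw [VbarK_transpose, VbarK, ← Matrix.mul_kronecker_mul, ← Matrix.mul_kronecker_mul]
  simp

end Aux

/-- **Theorem 1, observable part.** With the CKF
(`P₀ = p·I`, gains `L_k`, state `x̂`) and the observable-subsystem filter
started at `P̂₀ = (I_n⊗V̄)P₀(I_n⊗V̄)ᵀ` and `ξ̂_o[0] = (I_n⊗V̄)x̂[0]` with the same
measurements, one has for every `k`: `P̂_k = (I_n⊗V̄)P_k(I_n⊗V̄)ᵀ`,
`L̂_k = (I_n⊗V̄)L_k`, and `ξ̂_o[k] = (I_n⊗V̄)x̂[k]`. -/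
theorem stmt_12 (n m : ℕ) (hn : 1 ≤ n) (hm : 2 ≤ m)
    (A : Matrix (Fin n) (Fin n) ℝ) (r : ℝ) (hr : r ≠ 0)
    (Q : Matrix (Fin n) (Fin n) ℝ) (hQ : Q.PosSemidef)
    (p : ℝ) (hp : 0 ≤ p)
    (P : ℕ → Matrix (Fin n × Fin m) (Fin n × Fin m) ℝ)
    (L : ℕ → Matrix (Fin n × Fin m) (Fin 1 × Fin (m-1)) ℝ)
    (hP0 : P 0 = p • 1)
    (hL : ∀ k, L k = -(Fmat n m A * P k * (Hmat n m)ᵀ *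
      (Hmat n m * P k * (Hmat n m)ᵀ + r ^ 2 • 1)⁻¹))
    (hP : ∀ k, P (k+1) = (Fmat n m A + L k * Hmat n m) * P k * (Fmat n m A)ᵀ +
      Q ⊗ₖ (1 : Matrix (Fin m) (Fin m) ℝ))
    (y : ℕ → Fin 1 × Fin (m-1) → ℝ)
    (xhat : ℕ → Fin n × Fin m → ℝ)
    (hx : ∀ k, xhat (k+1) =
      Fmat n m A *ᵥ xhat k - L k *ᵥ (y k - Hmat n m *ᵥ xhat k))
    (Phat : ℕ → Matrix (Fin n × Fin (m-1)) (Fin n × Fin (m-1)) ℝ)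
    (Lhat : ℕ → Matrix (Fin n × Fin (m-1)) (Fin 1 × Fin (m-1)) ℝ)
    (hPhat0 : Phat 0 = VbarK n m * P 0 * (VbarK n m)ᵀ)
    (hLhat : ∀ k, Lhat k = -(Foo n m A * Phat k * (Ho n m)ᵀ *
      (Ho n m * Phat k * (Ho n m)ᵀ + r ^ 2 • 1)⁻¹))
    (hPhat : ∀ k, Phat (k+1) =
      (Foo n m A + Lhat k * Ho n m) * Phat k * (Foo n m A)ᵀ +
        Q ⊗ₖ (Vbar m * (Vbar m)ᵀ))
    (ξo : ℕ → Fin n × Fin (m-1) → ℝ)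
    (hξo : ∀ k, ξo (k+1) =
      Foo n m A *ᵥ ξo k - Lhat k *ᵥ (y k - Ho n m *ᵥ ξo k))
    (hξo0 : ξo 0 = VbarK n m *ᵥ xhat 0) :
    ∀ k, Phat k = VbarK n m * P k * (VbarK n m)ᵀ ∧
      Lhat k = VbarK n m * L k ∧
      ξo k = VbarK n m *ᵥ xhat k := by
  have key : ∀ k, Phat k = VbarK n m * P k * (VbarK n m)ᵀ →
      Lhat k = VbarK n m * L k := by
    intro k hk
    have h1 : Ho n m * Phat k * (Ho n m)ᵀ = Hmat n m * P k * (Hmat n m)ᵀ := by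
      rw [hk]
      simp only [Matrix.mul_assoc]
      rw [VbarKT_mul_HoT, Ho_VbarK_assoc]
    have h2 : Foo n m A * Phat k * (Ho n m)ᵀ =
        VbarK n m * (Fmat n m A * (P k * (Hmat n m)ᵀ)) := by
      rw [hk]
      simp only [Matrix.mul_assoc]
      rw [VbarKT_mul_HoT, Foo_VbarK_assoc]
    rw [hLhat, hL, h1, h2, Matrix.mul_assoc, Matrix.mul_neg]
    simp only [Matrix.mul_assoc]
  intro k
  induction k with
  | zero =>
    exact ⟨hPhat0, key 0 hPhat0, hξo0⟩
  | succ k ih =>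
    obtain ⟨hPk, hLk, hξk⟩ := ih
    have hPk1 : Phat (k+1) = VbarK n m * P (k+1) * (VbarK n m)ᵀ := by
      rw [hPhat, hP, hPk, hLk]
      simp only [Matrix.add_mul, Matrix.mul_add, Matrix.mul_assoc]
      rw [VbarKT_mul_FooT, Foo_VbarK_assoc, Ho_VbarK_assoc, VbarK_mul_QK]
    refine ⟨hPk1, key (k+1) hPk1, ?_⟩
    rw [hξo, hx, hξk, hLk]
    simp only [Matrix.mulVec_sub, Matrix.mulVec_mulVec]
    rw [Foo_mul_VbarK, ← Ho_mul_VbarK n m]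
    simp only [Matrix.mul_assoc]
end
end

section
/- Fix integers n ≥ 1, m ≥ 2, let A ∈ ℝ^{n×n}, C = (1,0,…,0) ∈ ℝ^{1×n}, F = A⊗I_m, H = C⊗V̄. For any finite sequence of matrices N_1, …, N_ℓ ∈ ℝ^{n(m-1)×(m-1)} (ℓ ≥ 0), the ordered product M = (F + (I_n⊗V̄†)N_ℓ H)·(F + (I_n⊗V̄†)N_{ℓ-1} H)⋯(F + (I_n⊗V̄†)N_1 H) satisfies M·(I_n⊗1_m) = (I_n⊗1_m)·A^ℓ. Consequently H·M·(I_n⊗1_m) = 0, and for every u ∈ ℝ^{n} we have M(u⊗1_m) = (A^ℓ u)⊗1_m, so that H·M·(u⊗1_m) = 0. -/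
open Matrix
open scoped Kronecker Matrix

noncomputable section

/-- The ordered closed-loop product
`M_ℓ = (F + (I_n⊗V̄†)N_ℓ H)·(F + (I_n⊗V̄†)N_{ℓ-1} H)⋯(F + (I_n⊗V̄†)N_1 H)`,
with `M_0 = I`. -/
def prodCL (n m : ℕ) (A : Matrix (Fin n) (Fin n) ℝ)
    (N : ℕ → Matrix (Fin n × Fin (m-1)) (Fin 1 × Fin (m-1)) ℝ) :
    ℕ → Matrix (Fin n × Fin m) (Fin n × Fin m) ℝ
  | 0 => 1
  | l + 1 => (Fmat n m A + VdagK n m * N (l+1) * Hmat n m) * prodCL n m A N l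


lemma Vbar_rowsum (m : ℕ) (hm : 2 ≤ m) (b : Fin (m-1)) : ∑ k : Fin m, Vbar m b k = 0 := by
  have hb : (b : ℕ) < m - 1 := b.2
  have h1 : ∀ k : Fin m, Vbar m b k =
      (if k = (⟨m-1, by omega⟩ : Fin m) then (-1:ℝ) else 0) +
      (if k = (⟨(b:ℕ), by omega⟩ : Fin m) then (1:ℝ) else 0) := by
    intro k
    simp only [Vbar, Matrix.of_apply, Fin.ext_iff]
    have hbm : ¬ (b:ℕ) = m - 1 := by omega
    by_cases h : (k:ℕ) = m - 1
    · have : ¬ (k:ℕ) = (b:ℕ) := by omega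
      simp [h, this, hbm]
      omega
    · by_cases h2 : (k:ℕ) = (b:ℕ) <;> simp [h, h2, hbm]
  rw [Finset.sum_congr rfl (fun k _ => h1 k), Finset.sum_add_distrib]
  simp

lemma Fmat_onesK (n m : ℕ) (A : Matrix (Fin n) (Fin n) ℝ) :
    Fmat n m A * onesK n m = onesK n m * A := by
  ext ⟨i, k⟩ j
  simp [Fmat, onesK, Matrix.mul_apply, Fintype.sum_prod_type, Matrix.one_apply]

lemma Hmat_onesK (n m : ℕ) (hm : 2 ≤ m) : Hmat n m * onesK n m = 0 := by
  ext ⟨a, b⟩ j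
  simp only [Hmat, onesK, Cmat, Matrix.mul_apply, Fintype.sum_prod_type,
    kroneckerMap_apply, Matrix.of_apply, Matrix.zero_apply]
  have : ∀ i : Fin n, ∑ k : Fin m,
      (if (i:ℕ) = 0 then (1:ℝ) else 0) * Vbar m b k * (if i = j then 1 else 0) = 0 := by
    intro i
    rw [← Finset.sum_mul, ← Finset.mul_sum, Vbar_rowsum m hm b]
    ring
  exact Finset.sum_eq_zero fun i _ => this i

/-- For any finite sequence `N_1,…,N_ℓ`, the ordered product `M`
satisfies `M(I_n⊗1_m) = (I_n⊗1_m)A^ℓ`; consequently `H·M·(I_n⊗1_m) = 0`, and for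
every `u ∈ ℝⁿ` one has `M(u⊗1_m) = (A^ℓu)⊗1_m` and `H·M·(u⊗1_m) = 0`. -/
theorem stmt_14 (n m : ℕ) (hn : 1 ≤ n) (hm : 2 ≤ m)
    (A : Matrix (Fin n) (Fin n) ℝ)
    (N : ℕ → Matrix (Fin n × Fin (m-1)) (Fin 1 × Fin (m-1)) ℝ) (l : ℕ) :
    prodCL n m A N l * onesK n m = onesK n m * A ^ l ∧
    Hmat n m * (prodCL n m A N l * onesK n m) = 0 ∧
    ∀ u : Fin n → ℝ,
      prodCL n m A N l *ᵥ (onesK n m *ᵥ u) = onesK n m *ᵥ (A ^ l *ᵥ u) ∧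
      Hmat n m *ᵥ (prodCL n m A N l *ᵥ (onesK n m *ᵥ u)) = 0 := by
  have key : prodCL n m A N l * onesK n m = onesK n m * A ^ l := by
    induction l with
    | zero => simp [prodCL]
    | succ l ih =>
      have hz : (VdagK n m * N (l+1) * Hmat n m) * (onesK n m * A ^ l) = 0 := by
        rw [← Matrix.mul_assoc, Matrix.mul_assoc (VdagK n m * N (l+1)), Hmat_onesK n m hm]
        simp
      rw [prodCL, Matrix.mul_assoc, ih, Matrix.add_mul, hz, add_zero,
        ← Matrix.mul_assoc, Fmat_onesK, Matrix.mul_assoc, ← pow_succ']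
  have hH : Hmat n m * (prodCL n m A N l * onesK n m) = 0 := by
    rw [key, ← Matrix.mul_assoc, Hmat_onesK n m hm, Matrix.zero_mul]
  refine ⟨key, hH, fun u => ?_⟩
  constructor
  · rw [Matrix.mulVec_mulVec, key, Matrix.mulVec_mulVec]
  · rw [Matrix.mulVec_mulVec, Matrix.mulVec_mulVec, Matrix.mul_assoc, hH, Matrix.zero_mulVec]
end
end
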